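/- Fix an integer n ≥ 0 and a real c ≥ 0. Then the map z ↦ φ_n(z;c) is complex differentiable (analytic) on the open right half-plane {z ∈ ℂ : Re z > 0}, and for every z with Re z > 0, φ_n(z;c) = (2^{(n+1)/2} · z^{n/2} / √π) · Hh_n(c/√(2z)), where z^{n/2} and √(2z) are taken with the principal branch of the square root. -/

import Mathlib

/-!
Both sides are holomorphic on the right half-plane, so by the identity theorem it suffices
to compare them at real `z = t > 0`.

Holomorphy comes from `complexMGF`: a Laplace transform `u ↦ ∫ e^{u X} w dμ` against a
nonnegative weight `w` is the complex moment generating function of `X` under the measure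
`w μ`. The integral in `phiC n c z` is such a transform of `X = τ²` on `(c, ∞)` with weight
`τ (τ - c)^{n+1}`, taken at `u = -1/(4z)`; and `Hh n w` is `e^{-w²/2}/n!` times the transform
of `X = s` on `(0, ∞)` with weight `e^{-s²/2} s^n`, taken at `u = -w`.

At `z = t`, one integration by parts against `τ e^{-τ²/(4t)}` replaces `τ (τ - c)^{n+1}` by
`2t (n+1) (τ - c)^n`, and the substitution `τ = c + √(2t) s` turns what is left into
`√(2t)^{n+1} n! Hh n (c/√(2t))`.
-/

open MeasureTheory ProbabilityTheory Set Filter Topology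

/-- `φ_n(z;c) = z^{-3/2}/(2√π (n+1)!) ∫_c^∞ e^{-τ²/(4z)} τ (τ-c)^{n+1} dτ` for complex `z`
(principal branch of `z^{-3/2}`). -/
noncomputable def phiC (n : ℕ) (c : ℝ) (z : ℂ) : ℂ :=
  z ^ (-(3 : ℂ) / 2) / (2 * (Real.sqrt Real.pi : ℂ) * (Nat.factorial (n + 1) : ℂ)) *
    ∫ τ in Set.Ioi c, Complex.exp (-(τ : ℂ) ^ 2 / (4 * z)) * (τ : ℂ) * ((τ : ℂ) - (c : ℂ)) ^ (n + 1)

/-- `Hh_n(w) = (1/n!) ∫_0^∞ e^{-(s+w)²/2} s^n ds`. -/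
noncomputable def Hh (n : ℕ) (w : ℂ) : ℂ :=
  (1 / (Nat.factorial n : ℂ)) *
    ∫ s in Set.Ioi (0 : ℝ), Complex.exp (-((s : ℂ) + w) ^ 2 / 2) * (s : ℂ) ^ n

theorem differentiableOn_integral_cexp_mul_mul {Ω : Type*} [MeasurableSpace Ω] {μ : Measure Ω}
    {X w : Ω → ℝ} {S : Set ℝ} (hS : IsOpen S)
    (hw_meas : AEMeasurable w μ) (hw : 0 ≤ᵐ[μ] w)
    (hint : ∀ t ∈ S, Integrable (fun ω ↦ Real.exp (t * X ω) * w ω) μ) :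
    DifferentiableOn ℂ (fun z : ℂ ↦ ∫ ω, Complex.exp (z * X ω) * w ω ∂μ)
      {z | z.re ∈ S} := by
  set ν := μ.withDensity fun ω ↦ (w ω).toNNReal
  have hmeas : AEMeasurable (fun ω ↦ (w ω).toNNReal) μ := hw_meas.real_toNNReal
  have hsmul : ∀ {E : Type} [NormedAddCommGroup E] [NormedSpace ℝ E] (g : Ω → E),
      (fun ω ↦ (w ω).toNNReal • g ω) =ᵐ[μ] fun ω ↦ w ω • g ω := fun g ↦ by
    filter_upwards [hw] with ω hω
    rw [NNReal.smul_def, Real.coe_toNNReal _ hω]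
  have heq : (fun z : ℂ ↦ ∫ ω, Complex.exp (z * X ω) * w ω ∂μ) = complexMGF X ν := by
    ext z
    rw [complexMGF, integral_withDensity_eq_integral_smul₀ hmeas]
    refine integral_congr_ae ((hsmul _).trans (Eventually.of_forall fun ω ↦ ?_)).symm
    simp [Complex.real_smul, mul_comm]
  have hS_sub : S ⊆ interior (integrableExpSet X ν) := by
    refine interior_maximal (fun t ht ↦ ?_) hS
    rw [integrableExpSet, mem_ofPred_eq, integrable_withDensity_iff_integrable_smul₀ hmeas,
      integrable_congr (hsmul _)]
    simpa [smul_eq_mul, mul_comm] using hint t ht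
  rw [heq]
  exact differentiableOn_complexMGF.mono fun z hz ↦ hS_sub hz

theorem integrableOn_Ioi_pow_mul_exp_neg_mul_sq {b : ℝ} (hb : 0 < b) (k : ℕ) :
    IntegrableOn (fun x : ℝ ↦ x ^ k * Real.exp (-b * x ^ 2)) (Ioi 0) := by
  simpa [Real.rpow_natCast] using
    integrableOn_rpow_mul_exp_neg_mul_sq hb (s := k) (by linarith [k.cast_nonneg (α := ℝ)])

theorem integrableOn_Ioi_exp_neg_mul_sq_mul_pow_mul_pow {b c : ℝ} (hb : 0 < b) (hc : 0 ≤ c)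
    (j k : ℕ) :
    IntegrableOn (fun τ : ℝ ↦ Real.exp (-b * τ ^ 2) * τ ^ j * (τ - c) ^ k) (Ioi c) := by
  refine ((integrableOn_Ioi_pow_mul_exp_neg_mul_sq hb (j + k)).mono_set
    (Ioi_subset_Ioi hc)).mono' (by fun_prop) ?_
  filter_upwards [ae_restrict_mem measurableSet_Ioi] with τ (hτ : c < τ)
  have hτ0 : 0 ≤ τ := by linarith
  have hτc : 0 ≤ τ - c := by linarith
  rw [norm_mul, norm_mul, norm_pow, norm_pow, Real.norm_of_nonneg (Real.exp_pos _).le,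
    Real.norm_of_nonneg hτ0, Real.norm_of_nonneg hτc, pow_add]
  have : (τ - c) ^ k ≤ τ ^ k := pow_le_pow_left₀ hτc (by linarith) k
  calc Real.exp (-b * τ ^ 2) * τ ^ j * (τ - c) ^ k
      ≤ Real.exp (-b * τ ^ 2) * τ ^ j * τ ^ k := by
        have := pow_nonneg hτ0 j
        gcongr
    _ = _ := by ring

theorem integrableOn_Ioi_exp_mul_mul_exp_neg_sq_mul_pow (t : ℝ) (n : ℕ) :
    IntegrableOn (fun s : ℝ ↦ Real.exp (t * s) * (Real.exp (-s ^ 2 / 2) * s ^ n)) (Ioi 0) := by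
  refine ((integrableOn_Ioi_pow_mul_exp_neg_mul_sq (by norm_num : (0 : ℝ) < 1 / 4) n).const_mul
    (Real.exp (t ^ 2))).mono' (by fun_prop) ?_
  filter_upwards [ae_restrict_mem measurableSet_Ioi] with s (hs : 0 < s)
  rw [norm_mul, norm_mul, norm_pow, Real.norm_of_nonneg (Real.exp_pos _).le,
    Real.norm_of_nonneg (Real.exp_pos _).le, Real.norm_of_nonneg hs.le]
  have hexp : Real.exp (t * s) * Real.exp (-s ^ 2 / 2)
      ≤ Real.exp (t ^ 2) * Real.exp (-(1 / 4) * s ^ 2) := by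
    rw [← Real.exp_add, ← Real.exp_add]
    exact Real.exp_le_exp.2 (by nlinarith [sq_nonneg (t - s / 2)])
  calc Real.exp (t * s) * (Real.exp (-s ^ 2 / 2) * s ^ n)
      = Real.exp (t * s) * Real.exp (-s ^ 2 / 2) * s ^ n := by ring
    _ ≤ Real.exp (t ^ 2) * Real.exp (-(1 / 4) * s ^ 2) * s ^ n := by gcongr
    _ = _ := by ring

theorem integral_Ioi_eq_smul_integral_comp_mul_add {E : Type*} [NormedAddCommGroup E]
    [NormedSpace ℝ E] (f : ℝ → E) (c : ℝ) {a : ℝ} (ha : 0 < a) :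
    ∫ τ in Ioi c, f τ = a • ∫ s in Ioi 0, f (a * s + c) := by
  have hshift : ∫ τ in Ioi c, f τ = ∫ u in Ioi 0, f (u + c) := by
    have := (measurePreserving_add_right volume c).setIntegral_preimage_emb
      (measurableEmbedding_addRight c) f (Ioi c)
    rwa [preimage_add_const_Ioi, sub_self, eq_comm] at this
  have hscale := integral_comp_mul_left_Ioi' (fun u ↦ f (u + c)) 0 ha
  rw [mul_zero, eq_comm] at hscale
  rw [hshift, hscale]

theorem integral_Ioi_exp_neg_mul_sq_mul_self_mul_pow_succ {b c : ℝ} (hb : 0 < b) (hc : 0 ≤ c)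
    (k : ℕ) :
    ∫ τ in Ioi c, Real.exp (-b * τ ^ 2) * τ * (τ - c) ^ (k + 1)
      = (k + 1) / (2 * b) * ∫ τ in Ioi c, Real.exp (-b * τ ^ 2) * (τ - c) ^ k := by
  set G : ℝ → ℝ := fun τ ↦ -(Real.exp (-b * τ ^ 2) * (τ - c) ^ (k + 1)) / (2 * b)
  set g : ℝ → ℝ := fun τ ↦ Real.exp (-b * τ ^ 2) * τ * (τ - c) ^ (k + 1)
  set h : ℝ → ℝ := fun τ ↦ Real.exp (-b * τ ^ 2) * (τ - c) ^ k
  have hg : IntegrableOn g (Ioi c) := by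
    simpa [g] using integrableOn_Ioi_exp_neg_mul_sq_mul_pow_mul_pow hb hc 1 (k + 1)
  have hh : IntegrableOn h (Ioi c) := by
    simpa [h] using integrableOn_Ioi_exp_neg_mul_sq_mul_pow_mul_pow hb hc 0 k
  have hG : IntegrableOn G (Ioi c) := by
    simpa [G, neg_div, IntegrableOn] using
      ((integrableOn_Ioi_exp_neg_mul_sq_mul_pow_mul_pow hb hc 0 (k + 1)).div_const (2 * b)).neg
  have hderiv : ∀ τ, HasDerivAt G (g τ - (k + 1) / (2 * b) * h τ) τ := fun τ ↦ by
    have := ((((hasDerivAt_pow 2 τ).const_mul (-b)).exp.mul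
      (((hasDerivAt_id τ).sub_const c).pow (k + 1))).neg.div_const (2 * b))
    refine this.congr_deriv ?_
    simp only [g, h, id, Pi.pow_apply, Nat.add_sub_cancel]
    field_simp
    push_cast
    ring
  have hG' : IntegrableOn (fun τ ↦ g τ - (k + 1) / (2 * b) * h τ) (Ioi c) :=
    hg.sub (hh.const_mul _)
  have hftc := integral_Ioi_of_hasDerivAt_of_tendsto' (fun τ _ ↦ hderiv τ) hG'
    (tendsto_zero_of_hasDerivAt_of_integrableOn_Ioi (fun τ _ ↦ hderiv τ) hG' hG)
  rw [integral_sub hg (hh.const_mul _), integral_const_mul] at hftc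
  simp only [G, sub_self, zero_pow (Nat.succ_ne_zero k), mul_zero, neg_zero, zero_div] at hftc
  linarith

theorem integral_Ioi_exp_neg_sq_div_mul_self_mul_pow_succ {c t : ℝ} (hc : 0 ≤ c) (ht : 0 < t)
    (n : ℕ) :
    ∫ τ in Ioi c, Real.exp (-τ ^ 2 / (4 * t)) * τ * (τ - c) ^ (n + 1)
      = (n + 1) * √(2 * t) ^ (n + 3) *
          ∫ s in Ioi 0, Real.exp (-(s + c / √(2 * t)) ^ 2 / 2) * s ^ n := by
  set a := √(2 * t)
  have ha : 0 < a := Real.sqrt_pos.2 (by linarith)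
  have ha2 : a ^ 2 = 2 * t := Real.sq_sqrt (by linarith)
  have h4t : 4 * t = 2 * a ^ 2 := by rw [ha2]; ring
  have hb : (0 : ℝ) < 1 / (4 * t) := by positivity
  have hexp : ∀ τ : ℝ, -τ ^ 2 / (4 * t) = -(1 / (4 * t)) * τ ^ 2 := fun τ ↦ by ring
  have hsubst : ∀ s : ℝ, Real.exp (-(1 / (4 * t)) * (a * s + c) ^ 2) * (a * s + c - c) ^ n
      = a ^ n * (Real.exp (-(s + c / a) ^ 2 / 2) * s ^ n) := fun s ↦ by
    have : -(1 / (4 * t)) * (a * s + c) ^ 2 = -(s + c / a) ^ 2 / 2 := by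
      rw [h4t]; field_simp
    rw [this]; ring
  simp_rw [hexp]
  rw [integral_Ioi_exp_neg_mul_sq_mul_self_mul_pow_succ hb hc,
    integral_Ioi_eq_smul_integral_comp_mul_add _ c ha, smul_eq_mul]
  simp_rw [hsubst]
  rw [integral_const_mul, h4t]
  field_simp
  ring

theorem differentiableOn_integral_cexp_neg_sq_div_mul_self_mul_pow {c : ℝ} (hc : 0 ≤ c)
    (k : ℕ) :
    DifferentiableOn ℂ (fun z : ℂ ↦ ∫ τ in Ioi c,
      Complex.exp (-(τ : ℂ) ^ 2 / (4 * z)) * τ * ((τ : ℂ) - c) ^ k) {z | 0 < z.re} := by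
  have hL := differentiableOn_integral_cexp_mul_mul (μ := volume.restrict (Ioi c))
    (X := fun τ ↦ τ ^ 2) (w := fun τ ↦ τ * (τ - c) ^ k) isOpen_Iio (by fun_prop)
    (by
      filter_upwards [ae_restrict_mem measurableSet_Ioi] with τ (hτ : c < τ)
      exact mul_nonneg (by linarith) (pow_nonneg (by linarith) k))
    (fun t (ht : t < 0) ↦ by
      simpa [mul_assoc, IntegrableOn] using
        integrableOn_Ioi_exp_neg_mul_sq_mul_pow_mul_pow (b := -t) (by linarith) hc 1 k)
  have h4z : ∀ z : ℂ, 0 < z.re → 4 * z ≠ 0 := fun z hz ↦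
    mul_ne_zero (by norm_num) fun h ↦ by simp [h] at hz
  have hmaps : MapsTo (fun z : ℂ ↦ -(4 * z)⁻¹) {z | 0 < z.re} {u | u.re ∈ Iio 0} := by
    intro z (hz : 0 < z.re)
    rw [mem_ofPred_eq, mem_Iio, Complex.neg_re, Complex.inv_re, neg_lt_zero]
    exact div_pos (by simpa using hz) (Complex.normSq_pos.2 (h4z z hz))
  have hdiff : DifferentiableOn ℂ (fun z : ℂ ↦ -(4 * z)⁻¹) {z | 0 < z.re} := fun z hz ↦
    ((differentiableAt_id.const_mul 4).inv (h4z z hz)).neg.differentiableWithinAt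
  refine (hL.comp hdiff hmaps).congr fun z hz ↦ ?_
  refine integral_congr_ae (Eventually.of_forall fun τ ↦ ?_)
  push_cast
  rw [show -(4 * z)⁻¹ * (τ : ℂ) ^ 2 = -(τ : ℂ) ^ 2 / (4 * z) by ring]
  ring

theorem differentiable_Hh (n : ℕ) : Differentiable ℂ (Hh n) := by
  have hL := differentiableOn_integral_cexp_mul_mul (μ := volume.restrict (Ioi 0))
    (X := fun s ↦ s) (w := fun s ↦ Real.exp (-s ^ 2 / 2) * s ^ n) isOpen_univ (by fun_prop)
    (by
      filter_upwards [ae_restrict_mem measurableSet_Ioi] with s (hs : 0 < s)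
      positivity)
    (fun t _ ↦ integrableOn_Ioi_exp_mul_mul_exp_neg_sq_mul_pow t n)
  simp only [mem_univ, ofPred_true, differentiableOn_univ] at hL
  have hHh : Hh n = fun w ↦ 1 / (n.factorial : ℂ) * (Complex.exp (-w ^ 2 / 2) *
      ∫ s in Ioi (0 : ℝ), Complex.exp (-w * s) * ((Real.exp (-s ^ 2 / 2) * s ^ n : ℝ) : ℂ)) := by
    ext w
    rw [Hh]
    congr 1
    rw [← integral_const_mul (Complex.exp (-w ^ 2 / 2))]
    refine integral_congr_ae (Eventually.of_forall fun s ↦ ?_)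
    push_cast
    rw [← mul_assoc, ← mul_assoc, ← Complex.exp_add, ← Complex.exp_add]
    ring_nf
  rw [hHh]
  exact (differentiable_const _).mul ((by fun_prop : Differentiable ℂ fun w : ℂ ↦
    Complex.exp (-w ^ 2 / 2)).mul (hL.comp differentiable_neg))

theorem rpow_neg_three_halves_mul_integral_Ioi_exp_neg_sq_div_mul_self_mul_pow_succ {c t : ℝ}
    (hc : 0 ≤ c) (ht : 0 < t) (n : ℕ) :
    t ^ (-(3 : ℝ) / 2) / (2 * √Real.pi * (n + 1).factorial) *
        ∫ τ in Ioi c, Real.exp (-τ ^ 2 / (4 * t)) * τ * (τ - c) ^ (n + 1)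
      = 2 ^ (((n : ℝ) + 1) / 2) / √Real.pi * t ^ ((n : ℝ) / 2) *
          (1 / n.factorial * ∫ s in Ioi 0, Real.exp (-(s + c / √(2 * t)) ^ 2 / 2) * s ^ n) := by
  have hpow : t ^ (-(3 : ℝ) / 2) * √(2 * t) ^ (n + 3)
      = 2 * 2 ^ (((n : ℝ) + 1) / 2) * t ^ ((n : ℝ) / 2) := by
    rw [Real.sqrt_eq_rpow, ← Real.rpow_natCast, ← Real.rpow_mul (by positivity),
      Real.mul_rpow zero_le_two ht.le, mul_left_comm, ← Real.rpow_add ht,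
      ← Real.rpow_one_add' zero_le_two (by positivity)]
    congr 2 <;> push_cast <;> ring
  have hfact : ((n + 1).factorial : ℝ) = (n + 1) * n.factorial := by
    push_cast [Nat.factorial_succ]; ring
  rw [integral_Ioi_exp_neg_sq_div_mul_self_mul_pow_succ hc ht, hfact]
  set J := ∫ s in Ioi 0, Real.exp (-(s + c / √(2 * t)) ^ 2 / 2) * s ^ n
  set X := t ^ (-(3 : ℝ) / 2)
  set A := √(2 * t) ^ (n + 3)
  set B := (2 : ℝ) ^ (((n : ℝ) + 1) / 2)
  set T := t ^ ((n : ℝ) / 2)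
  field_simp
  linear_combination J * hpow

theorem phiC_ofReal {c t : ℝ} (hc : 0 ≤ c) (ht : 0 < t) (n : ℕ) :
    phiC n c t = (((2 : ℝ) ^ (((n : ℝ) + 1) / 2) / Real.sqrt Real.pi : ℝ) : ℂ) *
      (t : ℂ) ^ ((n : ℂ) / 2) * Hh n ((c : ℂ) / (2 * t) ^ (1 / 2 : ℂ)) := by
  have hsqrt : (2 * (t : ℂ)) ^ (1 / 2 : ℂ) = (√(2 * t) : ℝ) := by
    rw [Real.sqrt_eq_rpow, Complex.ofReal_cpow (by positivity)]
    push_cast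
    rfl
  have hphi :
      ∫ τ in Ioi c, Complex.exp (-(τ : ℂ) ^ 2 / (4 * t)) * τ * ((τ : ℂ) - c) ^ (n + 1)
        = (∫ τ in Ioi c, Real.exp (-τ ^ 2 / (4 * t)) * τ * (τ - c) ^ (n + 1) : ℝ) := by
    rw [← integral_complex_ofReal]
    push_cast
    rfl
  have hHh :
      ∫ s in Ioi (0 : ℝ), Complex.exp (-((s : ℂ) + (c / √(2 * t) : ℝ)) ^ 2 / 2) * (s : ℂ) ^ n
        = (∫ s in Ioi 0, Real.exp (-(s + c / √(2 * t)) ^ 2 / 2) * s ^ n : ℝ) := by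
    rw [← integral_complex_ofReal]
    push_cast
    rfl
  have hcpow : ∀ x : ℝ, (t : ℂ) ^ (x : ℂ) = (t ^ x : ℝ) := fun x ↦
    (Complex.ofReal_cpow ht.le x).symm
  rw [phiC, Hh, hsqrt, ← Complex.ofReal_div, hHh, hphi,
    show (-(3 : ℂ) / 2) = ((-(3 : ℝ) / 2 : ℝ) : ℂ) by push_cast; rfl,
    show ((n : ℂ) / 2) = (((n : ℝ) / 2 : ℝ) : ℂ) by push_cast; rfl, hcpow, hcpow]
  have := congrArg (fun x : ℝ ↦ (x : ℂ))
    (rpow_neg_three_halves_mul_integral_Ioi_exp_neg_sq_div_mul_self_mul_pow_succ hc ht n)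
  push_cast at this ⊢
  linear_combination this

theorem differentiableOn_phiC {c : ℝ} (hc : 0 ≤ c) (n : ℕ) :
    DifferentiableOn ℂ (phiC n c) {z : ℂ | 0 < z.re} := by
  have hpow : DifferentiableOn ℂ (fun z : ℂ ↦ z ^ (-(3 : ℂ) / 2)) {z : ℂ | 0 < z.re} :=
    fun z hz ↦ (differentiableAt_id.cpow_const (Or.inl hz)).differentiableWithinAt
  exact (hpow.div_const _).mul (differentiableOn_integral_cexp_neg_sq_div_mul_self_mul_pow hc _)

theorem differentiableOn_mul_cpow_mul_Hh_div_sqrt (K : ℂ) (c : ℝ) (n : ℕ) :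
    DifferentiableOn ℂ (fun z : ℂ ↦ K * z ^ ((n : ℂ) / 2) * Hh n (c / (2 * z) ^ (1 / 2 : ℂ)))
      {z : ℂ | 0 < z.re} := by
  intro z (hz : 0 < z.re)
  have h2z : 0 < (2 * z).re := by simpa using hz
  have hsqrt : DifferentiableAt ℂ (fun z : ℂ ↦ (2 * z) ^ (1 / 2 : ℂ)) z :=
    (differentiableAt_id.const_mul 2).cpow_const (Or.inl h2z)
  have hsqrt_ne : (2 * z) ^ (1 / 2 : ℂ) ≠ 0 :=
    (Complex.cpow_ne_zero_iff_of_exponent_ne_zero (by norm_num)).2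
      fun h ↦ by simp [h] at h2z
  refine DifferentiableAt.differentiableWithinAt ?_
  exact ((differentiableAt_const K).mul (differentiableAt_id.cpow_const (Or.inl hz))).mul
    ((differentiable_Hh n).differentiableAt.comp z
      ((differentiableAt_const _).div hsqrt hsqrt_ne))

theorem eqOn_of_differentiableOn_of_eq_ofReal {E : Type*} [NormedAddCommGroup E]
    [NormedSpace ℂ E] [CompleteSpace E] {f g : ℂ → E}
    (hf : DifferentiableOn ℂ f {z : ℂ | 0 < z.re})
    (hg : DifferentiableOn ℂ g {z : ℂ | 0 < z.re})
    (hfg : ∀ t : ℝ, 0 < t → f t = g t) :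
    EqOn f g {z : ℂ | 0 < z.re} := by
  have hU : IsOpen {z : ℂ | 0 < z.re} := isOpen_lt continuous_const Complex.continuous_re
  have hreal : Tendsto ((↑) : ℝ → ℂ) (𝓝[>] 1) (𝓝[≠] 1) := by
    have := (Complex.continuous_ofReal.continuousWithinAt (x := 1)).tendsto_nhdsWithin
      (s := Ioi (1 : ℝ)) (t := {(1 : ℂ)}ᶜ) fun t (ht : 1 < t) ↦ by simpa using ht.ne'
    rwa [Complex.ofReal_one] at this
  refine (hf.analyticOnNhd hU).eqOn_of_preconnected_of_frequently_eq (hg.analyticOnNhd hU)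
    (convex_halfSpace_re_gt 0).isPreconnected (by simp) (hreal.frequently ?_)
  have hpos : ∀ᶠ t : ℝ in 𝓝[>] 1, f t = g t :=
    eventually_mem_nhdsWithin.mono fun t ht ↦ hfg t (one_pos.trans ht)
  exact hpos.frequently

/-- `z ↦ φ_n(z;c)` is analytic on the open right half-plane, where it equals
`(2^{(n+1)/2} z^{n/2}/√π) · Hh_n(c/√(2z))` (principal branches). -/
theorem phiC_analytic_and_Hh_formula (n : ℕ) (c : ℝ) (hc : 0 ≤ c) :
    DifferentiableOn ℂ (phiC n c) {z : ℂ | 0 < z.re} ∧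
    ∀ z : ℂ, 0 < z.re →
      phiC n c z
        = (((2 : ℝ) ^ (((n : ℝ) + 1) / 2) / Real.sqrt Real.pi : ℝ) : ℂ) *
            z ^ ((n : ℂ) / 2) * Hh n ((c : ℂ) / (2 * z) ^ (1 / 2 : ℂ)) :=
  ⟨differentiableOn_phiC hc n, fun _ hz ↦
    eqOn_of_differentiableOn_of_eq_ofReal (differentiableOn_phiC hc n)
      (differentiableOn_mul_cpow_mul_Hh_div_sqrt _ c n) (fun _ ht ↦ phiC_ofReal hc ht n) hz⟩
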